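/- arXiv:2509.01155 — 4 statements merged into one kernel-verified Lean document; each statement's English description precedes it below -/
import Mathlib

section
/- Let G = (V,E) be a simple, locally finite, connected, undirected graph, and let Ω ⊂ V be a connected subset such that either the boundary δΩ = {y ∈ V \ Ω : ∃ x ∈ Ω, y ~ x} is nonempty or Ω is infinite. Let c : Ω → [0,∞) and let u : Ω ∪ δΩ → ℝ satisfy -Δu(x) + c(x)u(x) ≥ 0 for all x ∈ Ω (where Δu(x) = Σ_{y~x}(u(y)-u(x))), u ≥ 0 on δΩ, and liminf_{d(x,x₀)→∞, x∈Ω} u(x) ≥ 0. Then u ≥ 0 on Ω. -/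
/-!
Suppose `u` is negative somewhere in `Ω`. Since `u ≥ -ε` far from `x₀` and balls of a locally
finite connected graph are finite, `u` attains a negative minimum `m` on `Ω`. Where `u = m` we get
`Δu ≤ c u ≤ 0`, while every term `u y - u x` of `Δu` is nonnegative (on `δΩ`, `u ≥ 0 > m`); so
every neighbour also has `u = m`, and in particular lies in `Ω`. As `Ω` is connected, `u ≡ m` on
`Ω`. A vertex of `δΩ` would then be a neighbour of `Ω` lying outside `Ω`, and an infinite `Ω` would
contradict the finiteness of the sublevel set `{x ∈ Ω | u x ≤ m}`.
-/

open SimpleGraph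

theorem Set.exists_isMinOn_of_finite_sublevel {α β : Type*} [LinearOrder β] {s : Set α}
    {f : α → β} {a : α} (ha : a ∈ s) (hfin : {x | x ∈ s ∧ f x ≤ f a}.Finite) :
    ∃ z ∈ s, IsMinOn f s z := by
  obtain ⟨z, ⟨hzs, hza⟩, hmin⟩ := Set.exists_min_image _ f hfin ⟨a, ha, le_rfl⟩
  refine ⟨z, hzs, fun x hx => ?_⟩
  by_cases hxa : f x ≤ f a
  · exact hmin x ⟨hx, hxa⟩
  · exact hza.trans (le_of_not_ge hxa)

namespace SimpleGraph

variable {V : Type*} {G : SimpleGraph V}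

theorem Connected.mem_of_forall_adj_mem (hG : G.Connected) {s : Set V}
    (hs : ∀ x y, G.Adj x y → x ∈ s → y ∈ s) {z : V} (hz : z ∈ s) (x : V) : x ∈ s := by
  by_contra hx
  obtain ⟨p⟩ := hG z x
  obtain ⟨d, -, hd₁, hd₂⟩ := p.exists_boundary_dart s hz hx
  exact hd₂ (hs _ _ d.adj hd₁)

section LocallyFinite

variable [G.LocallyFinite]

theorem Connected.finite_setOf_dist_le (hG : G.Connected) (x₀ : V) (n : ℕ) :
    {x | G.dist x₀ x ≤ n}.Finite := by
  induction n with
  | zero =>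
    refine (Set.finite_singleton x₀).subset fun x hx => ?_
    exact ((hG.dist_eq_zero_iff).1 (Nat.le_zero.1 hx)).symm
  | succ n ih =>
    refine ((ih.biUnion fun y _ => (G.neighborSet y).toFinite).insert x₀).subset fun x hx => ?_
    obtain ⟨p, hp⟩ := hG.exists_walk_length_eq_dist x x₀
    cases p with
    | nil => exact Set.mem_insert _ _
    | @cons _ y _ hadj q =>
      have hq : q.length ≤ n := by
        have hx : G.dist x₀ x ≤ n + 1 := hx
        rw [Walk.length_cons, dist_comm] at hp
        omega
      have hy : G.dist x₀ y ≤ n := dist_comm (G := G) ▸ (dist_le q).trans hq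
      exact Set.mem_insert_of_mem _ (Set.mem_biUnion hy hadj.symm)

theorem Connected.finite_setOf_le_of_liminf_nonneg (hG : G.Connected) {Ω : Set V} {u : V → ℝ}
    {x₀ : V} (hliminf : ∀ ε : ℝ, 0 < ε → ∃ N : ℕ, ∀ x ∈ Ω, N ≤ G.dist x₀ x → -ε ≤ u x)
    {a : ℝ} (ha : a < 0) : {x | x ∈ Ω ∧ u x ≤ a}.Finite := by
  obtain ⟨N, hN⟩ := hliminf (-a / 2) (by linarith)
  refine (hG.finite_setOf_dist_le x₀ N).subset fun x ⟨hx, hux⟩ => ?_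
  by_contra hfar
  linarith [hN x hx (le_of_not_ge hfar)]

noncomputable def laplacian (G : SimpleGraph V) [G.LocallyFinite] (u : V → ℝ) (x : V) : ℝ :=
  ∑ y ∈ G.neighborFinset x, (u y - u x)

theorem eq_of_adj_of_laplacian_nonpos {u : V → ℝ} {x y : V} (hmin : ∀ w, G.Adj x w → u x ≤ u w)
    (hΔ : G.laplacian u x ≤ 0) (hxy : G.Adj x y) : u y = u x := by
  have hterm : ∀ w ∈ G.neighborFinset x, 0 ≤ u w - u x := fun w hw =>
    sub_nonneg.2 (hmin w ((mem_neighborFinset G x w).1 hw))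
  have hzero := (Finset.sum_eq_zero_iff_of_nonneg hterm).1
    (le_antisymm hΔ (Finset.sum_nonneg hterm))
  exact sub_eq_zero.1 (hzero y ((mem_neighborFinset G x y).2 hxy))

end LocallyFinite

end SimpleGraph

/-- Discrete maximum principle on a locally finite connected graph. -/
theorem discrete_maximum_principle {V : Type*} (G : SimpleGraph V)
    [∀ v : V, Fintype (G.neighborSet v)]
    (hconn : G.Connected)
    (Ω : Set V)
    (hΩconn : (G.induce Ω).Connected)
    (bd : Set V)
    (hbd : bd = {y | y ∉ Ω ∧ ∃ x ∈ Ω, G.Adj x y})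
    (hne : bd.Nonempty ∨ Ω.Infinite)
    (c u : V → ℝ)
    (hc : ∀ x ∈ Ω, 0 ≤ c x)
    (heq : ∀ x ∈ Ω, 0 ≤ -(∑ y ∈ G.neighborFinset x, (u y - u x)) + c x * u x)
    (hb : ∀ y ∈ bd, 0 ≤ u y)
    (x₀ : V)
    (hliminf : ∀ ε : ℝ, 0 < ε → ∃ N : ℕ, ∀ x ∈ Ω, N ≤ G.dist x₀ x → -ε ≤ u x) :
    ∀ x ∈ Ω, 0 ≤ u x := by
  by_contra! ⟨x₁, hx₁, hux₁⟩
  have hfin := hconn.finite_setOf_le_of_liminf_nonneg hliminf hux₁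
  obtain ⟨z, hz, hmin⟩ := Set.exists_isMinOn_of_finite_sublevel hx₁ hfin
  have hm : u z < 0 := (hmin hx₁).trans_lt hux₁
  have hnbr : ∀ x ∈ Ω, ∀ y, G.Adj x y → y ∈ Ω ∨ y ∈ bd := fun x hx y hxy =>
    or_iff_not_imp_left.2 fun hy => hbd ▸ ⟨hy, x, hx, hxy⟩
  have hspread : ∀ x ∈ Ω, u x = u z → ∀ y, G.Adj x y → y ∈ Ω ∧ u y = u z := by
    intro x hx hux y hxy
    have hcu : c x * u x ≤ 0 := mul_nonpos_of_nonneg_of_nonpos (hc x hx) (hux ▸ hm.le)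
    have hΔ : G.laplacian u x ≤ 0 := by unfold laplacian; linarith [heq x hx]
    have hlocmin : ∀ w, G.Adj x w → u x ≤ u w := fun w hw =>
      hux ▸ (hnbr x hx w hw).elim (fun h => hmin h) fun h => hm.le.trans (hb w h)
    have huy : u y = u z := hux ▸ eq_of_adj_of_laplacian_nonpos hlocmin hΔ hxy
    exact ⟨(hnbr x hx y hxy).resolve_right fun hy => by linarith [hb y hy], huy⟩
  have hall : ∀ x : Ω, u x = u z := hΩconn.mem_of_forall_adj_mem (s := {x : Ω | u x = u z})
    (fun x y hxy hx => (hspread x x.2 hx y hxy).2) (z := ⟨z, hz⟩) rfl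
  rcases hne with ⟨y, hy⟩ | hinf
  · obtain ⟨hyΩ, x, hx, hxy⟩ := hbd ▸ hy
    exact hyΩ (hspread x hx (hall ⟨x, hx⟩) y hxy).1
  · exact hinf (hfin.subset fun x hx => ⟨hx, (hall ⟨x, hx⟩).trans_le (hmin hx₁)⟩)
end

section
/- Let u : ℤ² → ℝ satisfy Δu(x) ≤ 0 for all x ∈ ℤ² and u ≥ 0 on ℤ². Then u is constant. -/
/-!
The averaging operator `P` of the simple random walk on `ℤ²` is linear and monotone. If `0 ≤ v`
and `P v ≤ v`, the charge `μ = v - P v` satisfies `∑_{j<n} P^j μ = v - P^n v ≤ v`, while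
`P^j μ (x) ≥ μ x · P^j δ_x (x)`. The return probabilities `P^{2k} δ_x (x) = (C(2k,k) / 4^k)^2`
are at least `1 / (4k)`, hence not summable (recurrence of `ℤ²`), which forces `μ x = 0`.
Applied to the superharmonic function `min u (u x)`, this says that `u` is at least `u x` at
every neighbour of `x`, so `u` is constant.

The return probabilities are computed in the coordinates `x.1 + x.2`, `x.1 - x.2`, in which
each lattice step moves both coordinates by `±1`: the walk on `ℤ²` splits into two independent
simple walks on `ℤ`.
-/

/-- The lattice Laplacian on `ℤ²`: `Δu(x) = Σ_{y∼x}(u(y) - u(x))`. -/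
def latticeLap (u : ℤ × ℤ → ℝ) (x : ℤ × ℤ) : ℝ :=
  (u (x.1 + 1, x.2) - u x) + (u (x.1 - 1, x.2) - u x) +
    (u (x.1, x.2 + 1) - u x) + (u (x.1, x.2 - 1) - u x)

open Finset

namespace Module.End

variable {α : Type*} {P : Module.End ℝ (α → ℝ)}

theorem sum_range_pow_apply_sub (v : α → ℝ) (n : ℕ) :
    ∑ j ∈ range n, (P ^ j) (v - P v) = v - (P ^ n) v := by
  have step (j : ℕ) : (P ^ j) (v - P v) = (P ^ j) v - (P ^ (j + 1)) v := by
    rw [map_sub, pow_succ, mul_apply]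
  simp only [step, sum_range_sub']
  rfl

theorem monotone_pow (hP : Monotone P) (n : ℕ) : Monotone ⇑(P ^ n) := by
  rw [coe_pow]
  exact hP.iterate n

theorem sum_range_pow_apply_sub_le (hP : Monotone P) {v : α → ℝ} (hv : 0 ≤ v) (n : ℕ) :
    ∑ j ∈ range n, (P ^ j) (v - P v) ≤ v := by
  rw [sum_range_pow_apply_sub]
  simpa using monotone_pow hP n hv

theorem apply_eq_of_not_summable [DecidableEq α] (hP : Monotone P) {v : α → ℝ} (hv : 0 ≤ v)
    (hPv : P v ≤ v) {x : α} (hrec : ¬Summable fun n => (P ^ n) (Pi.single x 1) x) :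
    P v x = v x := by
  set μ := v - P v
  have hμ : 0 ≤ μ := sub_nonneg.mpr hPv
  have hsingle : μ x • Pi.single x 1 ≤ μ := by
    intro y
    rcases eq_or_ne y x with rfl | hy
    · simp
    · simpa [hy] using hμ y
  by_contra hne
  have hμx : 0 < μ x := (hμ x).lt_of_ne fun h => hne (by simp [μ] at h; linarith)
  refine hrec (summable_of_sum_range_le (c := v x / μ x) (fun n => ?_) fun n => ?_)
  · simpa using monotone_pow hP n ((Pi.single_nonneg (i := x)).mpr zero_le_one) x
  · rw [le_div_iff₀ hμx, sum_mul]
    calc ∑ j ∈ range n, (P ^ j) (Pi.single x 1) x * μ x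
        ≤ ∑ j ∈ range n, (P ^ j) μ x :=
          sum_le_sum fun j _ => by simpa [mul_comm] using monotone_pow hP j hsingle x
      _ = (∑ j ∈ range n, (P ^ j) μ) x := by simp
      _ ≤ v x := sum_range_pow_apply_sub_le hP hv n x

end Module.End

noncomputable def intAvg (g : ℤ → ℝ) (a : ℤ) : ℝ := (g (a + 1) + g (a - 1)) / 2

noncomputable def latticeAvg : Module.End ℝ (ℤ × ℤ → ℝ) where
  toFun f x := (f (x.1 + 1, x.2) + f (x.1 - 1, x.2) + f (x.1, x.2 + 1) + f (x.1, x.2 - 1)) / 4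
  map_add' f g := by ext x; simp only [Pi.add_apply]; ring
  map_smul' c f := by ext x; simp only [Pi.smul_apply, smul_eq_mul, RingHom.id_apply]; ring

theorem latticeAvg_apply (f : ℤ × ℤ → ℝ) (x : ℤ × ℤ) :
    latticeAvg f x =
      (f (x.1 + 1, x.2) + f (x.1 - 1, x.2) + f (x.1, x.2 + 1) + f (x.1, x.2 - 1)) / 4 :=
  rfl

theorem latticeLap_eq (u : ℤ × ℤ → ℝ) (x : ℤ × ℤ) :
    latticeLap u x = 4 * (latticeAvg u x - u x) := by
  rw [latticeLap, latticeAvg_apply]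
  ring

theorem latticeAvg_monotone : Monotone latticeAvg := fun f g hfg x => by
  simp only [latticeAvg_apply]
  linarith [hfg (x.1 + 1, x.2), hfg (x.1 - 1, x.2), hfg (x.1, x.2 + 1), hfg (x.1, x.2 - 1)]

theorem latticeAvg_rotate (g h : ℤ → ℝ) :
    latticeAvg (fun y => g (y.1 + y.2) * h (y.1 - y.2)) =
      fun x => intAvg g (x.1 + x.2) * intAvg h (x.1 - x.2) := by
  ext x
  simp only [latticeAvg_apply, intAvg]
  ring_nf

theorem latticeAvg_pow_rotate (g h : ℤ → ℝ) (n : ℕ) :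
    (latticeAvg ^ n) (fun y => g (y.1 + y.2) * h (y.1 - y.2)) =
      fun x => intAvg^[n] g (x.1 + x.2) * intAvg^[n] h (x.1 - x.2) := by
  induction n with
  | zero => rfl
  | succ n ih =>
    rw [pow_succ', Module.End.mul_apply, ih, latticeAvg_rotate, Function.iterate_succ_apply',
      Function.iterate_succ_apply']

theorem single_eq_rotate (x y : ℤ × ℤ) :
    (Pi.single x 1 : ℤ × ℤ → ℝ) y =
      (Pi.single (x.1 + x.2) 1 : ℤ → ℝ) (y.1 + y.2) *
        (Pi.single (x.1 - x.2) 1 : ℤ → ℝ) (y.1 - y.2) := by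
  simp only [Pi.single_apply, mul_ite, mul_one, mul_zero, Prod.ext_iff]
  split_ifs <;> first | rfl | omega

/-- The number of `±1` paths of length `n` from `0` to `a`. -/
def walkCount (n : ℕ) (a : ℤ) : ℕ :=
  if 0 ≤ (n : ℤ) + a ∧ Even ((n : ℤ) + a) then n.choose (((n : ℤ) + a).toNat / 2) else 0

theorem walkCount_succ (n : ℕ) (a : ℤ) :
    walkCount (n + 1) a = walkCount n (a + 1) + walkCount n (a - 1) := by
  unfold walkCount
  push_cast
  split_ifs <;> simp only [Int.even_iff] at * <;> try omega
  · obtain ⟨m, hm⟩ : ∃ m : ℕ, (n : ℤ) + 1 + a = 2 * m + 2 :=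
      ⟨((n + 1 + a) / 2 - 1).toNat, by omega⟩
    rw [show ((n : ℤ) + 1 + a).toNat / 2 = m + 1 by omega,
      show ((n : ℤ) + (a + 1)).toNat / 2 = m + 1 by omega,
      show ((n : ℤ) + (a - 1)).toNat / 2 = m by omega, Nat.choose_succ_succ', add_comm]
  · rw [show ((n : ℤ) + 1 + a).toNat / 2 = 0 by omega,
      show ((n : ℤ) + (a + 1)).toNat / 2 = 0 by omega]
    simp

theorem walkCount_zero (a : ℤ) : (walkCount 0 a : ℝ) = (Pi.single 0 1 : ℤ → ℝ) a := by
  rcases eq_or_ne a 0 with rfl | ha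
  · simp [walkCount]
  · rw [Pi.single_eq_of_ne ha, walkCount]
    split_ifs with h
    · obtain ⟨h0, k, hk⟩ := h
      simp only [Nat.cast_zero, zero_add] at *
      rw [Nat.choose_eq_zero_of_lt (by omega), Nat.cast_zero]
    · simp

theorem walkCount_two_mul_zero (k : ℕ) : walkCount (2 * k) 0 = k.centralBinom := by
  rw [walkCount, if_pos ⟨by omega, ⟨k, by push_cast; ring⟩⟩, Nat.centralBinom]
  congr
  omega

theorem intAvg_iterate_single (c : ℤ) (n : ℕ) :
    intAvg^[n] (Pi.single c 1) = fun a => (walkCount n (a - c) : ℝ) / 2 ^ n := by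
  induction n with
  | zero => ext a; simp [walkCount_zero, Pi.single_apply, sub_eq_zero]
  | succ n ih =>
    ext a
    rw [Function.iterate_succ_apply', ih, intAvg, walkCount_succ, pow_succ]
    push_cast
    ring_nf

theorem sixteen_pow_le_mul_centralBinom_sq {k : ℕ} (hk : 0 < k) :
    16 ^ k ≤ 4 * k * k.centralBinom ^ 2 := by
  induction k, hk using Nat.le_induction with
  | base => decide
  | succ k hk ih =>
    refine Nat.le_of_mul_le_mul_left ?_ k.succ_pos
    calc (k + 1) * 16 ^ (k + 1) = 16 * (k + 1) * 16 ^ k := by ring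
      _ ≤ 16 * (k + 1) * (4 * k * k.centralBinom ^ 2) := by gcongr
      _ = 16 * (4 * k * (k + 1)) * k.centralBinom ^ 2 := by ring
      _ ≤ 16 * (2 * k + 1) ^ 2 * k.centralBinom ^ 2 := by gcongr; nlinarith
      _ = (k + 1) * (4 * (k + 1) * (k + 1).centralBinom ^ 2) := by
        rw [show (k + 1) * (4 * (k + 1) * (k + 1).centralBinom ^ 2) =
            4 * ((k + 1) * (k + 1).centralBinom) ^ 2 by ring, Nat.succ_mul_centralBinom_succ]
        ring

theorem latticeAvg_pow_single_self (x : ℤ × ℤ) (n : ℕ) :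
    (latticeAvg ^ n) (Pi.single x 1) x = ((walkCount n 0 : ℝ) / 2 ^ n) ^ 2 := by
  rw [show (Pi.single x 1 : ℤ × ℤ → ℝ) = _ from funext (single_eq_rotate x), latticeAvg_pow_rotate,
    intAvg_iterate_single, intAvg_iterate_single]
  simp [sq]

theorem inv_four_mul_le_latticeAvg_pow_single_self (x : ℤ × ℤ) (k : ℕ) :
    1 / (4 * k : ℝ) ≤ (latticeAvg ^ (2 * k)) (Pi.single x 1) x := by
  rcases k.eq_zero_or_pos with rfl | hk
  · simp
  have h16 : (16 : ℝ) ^ k ≤ 4 * k * k.centralBinom ^ 2 := by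
    exact_mod_cast sixteen_pow_le_mul_centralBinom_sq hk
  have h4 : (((2 : ℝ) ^ 2) ^ k) ^ 2 = 16 ^ k := by rw [← pow_mul, mul_comm, pow_mul]; norm_num
  rw [latticeAvg_pow_single_self, walkCount_two_mul_zero, pow_mul,
    div_le_iff₀ (by positivity)]
  field_simp
  linarith

theorem not_summable_latticeAvg_pow_single_self (x : ℤ × ℤ) :
    ¬Summable fun n => (latticeAvg ^ n) (Pi.single x 1) x := by
  intro hsum
  have heven := hsum.comp_injective (mul_right_injective₀ two_ne_zero)
  refine Real.not_summable_one_div_natCast ?_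
  have := (heven.of_nonneg_of_le (fun k => by positivity)
    (inv_four_mul_le_latticeAvg_pow_single_self x)).mul_left 4
  refine this.congr fun k => ?_
  rcases eq_or_ne k 0 with rfl | hk
  · simp
  · field_simp

theorem le_of_avg_min_eq {a b c d m : ℝ} (h : (min a m + min b m + min c m + min d m) / 4 = m) :
    m ≤ a ∧ m ≤ b ∧ m ≤ c ∧ m ≤ d := by
  refine ⟨?_, ?_, ?_, ?_⟩ <;> by_contra! hlt <;>
    linarith [min_le_left a m, min_le_left b m, min_le_left c m, min_le_left d m,
      min_le_right a m, min_le_right b m, min_le_right c m, min_le_right d m]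

theorem le_neighbors_of_latticeAvg_le {u : ℤ × ℤ → ℝ} (hsuper : latticeAvg u ≤ u) (hpos : 0 ≤ u)
    (x : ℤ × ℤ) :
    u x ≤ u (x.1 + 1, x.2) ∧ u x ≤ u (x.1 - 1, x.2) ∧ u x ≤ u (x.1, x.2 + 1) ∧
      u x ≤ u (x.1, x.2 - 1) := by
  set w : ℤ × ℤ → ℝ := fun y => min (u y) (u x)
  have hw : 0 ≤ w := fun y => le_min (hpos y) (hpos x)
  have hPw : latticeAvg w ≤ w := fun y => by
    refine le_min ((latticeAvg_monotone (fun z => min_le_left _ _) y).trans (hsuper y)) ?_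
    rw [latticeAvg_apply]
    linarith [min_le_right (u (y.1 + 1, y.2)) (u x), min_le_right (u (y.1 - 1, y.2)) (u x),
      min_le_right (u (y.1, y.2 + 1)) (u x), min_le_right (u (y.1, y.2 - 1)) (u x)]
  have hx := Module.End.apply_eq_of_not_summable latticeAvg_monotone hw hPw
    (not_summable_latticeAvg_pow_single_self x)
  rw [latticeAvg_apply] at hx
  simp only [w, min_self] at hx
  exact le_of_avg_min_eq hx

theorem apply_eq_apply_zero_of_le_neighbors {u : ℤ × ℤ → ℝ}
    (h : ∀ x, u x ≤ u (x.1 + 1, x.2) ∧ u x ≤ u (x.1 - 1, x.2) ∧ u x ≤ u (x.1, x.2 + 1) ∧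
      u x ≤ u (x.1, x.2 - 1)) (x : ℤ × ℤ) :
    u x = u 0 := by
  have h₁ : Function.Periodic u (1, 0) := fun ⟨a, b⟩ =>
    le_antisymm (by simpa using (h (a + 1, b)).2.1) (by simpa using (h (a, b)).1)
  have h₂ : Function.Periodic u (0, 1) := fun ⟨a, b⟩ =>
    le_antisymm (by simpa using (h (a, b + 1)).2.2.2) (by simpa using (h (a, b)).2.2.1)
  calc u x = u (x - x.2 • (0, 1) - x.1 • (1, 0)) := by
        rw [h₁.sub_zsmul_eq, h₂.sub_zsmul_eq]
    _ = u 0 := by congr 1; ext <;> simp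

/-- Nonnegative superharmonic functions on `ℤ²` are constant. -/
theorem superharmonic_nonneg_constant (u : ℤ × ℤ → ℝ)
    (hsuper : ∀ x, latticeLap u x ≤ 0) (hpos : ∀ x, 0 ≤ u x) :
    ∃ a : ℝ, ∀ x, u x = a := by
  have hPu : latticeAvg u ≤ u := fun x => by linarith [hsuper x, latticeLap_eq u x]
  exact ⟨u 0, apply_eq_apply_zero_of_le_neighbors (le_neighbors_of_latticeAvg_le hPu hpos)⟩
end

section
/- Let f ∈ ℓ^∞_m(ℤ²) with m > 2 satisfy Σ_{x∈ℤ²} f(x) = 0, and let τ ∈ (0, (m−2)/(m+1)). Then Φ₀ ∗ f ∈ ℓ^∞_τ(ℤ²) with ‖Φ₀ ∗ f‖_{ℓ^∞_τ} ≤ (c₀^m/(m−2)⁴)(1/(m−2−τ(m+1)))^{1/(m+1)} ‖f‖_{ℓ^∞_m}, where c₀ is the universal constant from the pointwise estimate |(Φ₀∗f)(x)| ≤ (c₀^m/(m−2)⁴)‖f‖_{ℓ^∞_m}(e+|x|)^{(2−m)/(m+1)}(ln(e+|x|))^{1/(m+1)}. -/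
noncomputable def latticeNorm (x : ℤ × ℤ) : ℝ :=
  Real.sqrt ((x.1 : ℝ) ^ 2 + (x.2 : ℝ) ^ 2)

/-!
The logarithm is dominated by every positive power: `a ^ (-γ) * log a ≤ 1 / γ` for `a ≥ 0` and
`γ > 0`. Multiplying the pointwise estimate by the weight `(1 + |x|) ^ τ ≤ (e + |x|) ^ τ` leaves
`((e + |x|) ^ (-γ) * log (e + |x|)) ^ (1 / (m + 1))` with `γ = m - 2 - τ (m + 1) > 0`, which is
therefore at most `(1 / γ) ^ (1 / (m + 1))`.
-/

open Real

lemma rpow_neg_mul_log_le_one_div {a γ : ℝ} (ha : 0 ≤ a) (hγ : 0 < γ) :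
    a ^ (-γ) * log a ≤ 1 / γ := by
  rcases ha.eq_or_lt with rfl | ha
  · simp [hγ.le]
  rw [rpow_neg ha.le, inv_mul_le_iff₀ (rpow_pos_of_pos ha γ), mul_one_div]
  exact log_le_rpow_div ha.le hγ

lemma rpow_neg_mul_mul_log_rpow_le {a γ p : ℝ} (ha : 1 ≤ a) (hγ : 0 < γ) (hp : 0 ≤ p) :
    a ^ (-(γ * p)) * log a ^ p ≤ (1 / γ) ^ p := by
  have ha₀ : 0 ≤ a := zero_le_one.trans ha
  rw [← neg_mul, rpow_mul ha₀, ← mul_rpow (rpow_nonneg ha₀ _) (log_nonneg ha)]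
  exact rpow_le_rpow (mul_nonneg (rpow_nonneg ha₀ _) (log_nonneg ha))
    (rpow_neg_mul_log_le_one_div ha₀ hγ) hp

theorem green_convolution_weighted_estimate_general (Φ₀ f : ℤ × ℤ → ℝ)
    (m τ c₀ N : ℝ) (hm : 2 < m) (hτ₀ : 0 < τ) (hτ₁ : τ < (m - 2) / (m + 1))
    (hpointwise : ∀ x : ℤ × ℤ,
      |∑' y : ℤ × ℤ, Φ₀ (y - x) * f y| ≤
        (c₀ ^ m / (m - 2) ^ 4) * N *
          (Real.exp 1 + latticeNorm x) ^ ((2 - m) / (m + 1)) *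
          (Real.log (Real.exp 1 + latticeNorm x)) ^ (1 / (m + 1))) :
    ∀ x : ℤ × ℤ,
      |∑' y : ℤ × ℤ, Φ₀ (y - x) * f y| * (1 + latticeNorm x) ^ τ ≤
        (c₀ ^ m / (m - 2) ^ 4) * (1 / (m - 2 - τ * (m + 1))) ^ (1 / (m + 1)) * N := by
  intro x
  have hx := hpointwise x
  set C := c₀ ^ m / (m - 2) ^ 4
  set γ := m - 2 - τ * (m + 1)
  set r := latticeNorm x
  set a := exp 1 + r
  have he : 1 < exp 1 := one_lt_exp_iff.mpr one_pos
  have hr : 0 ≤ r := sqrt_nonneg _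
  have hγ : 0 < γ := by
    have := (lt_div_iff₀ (by linarith : 0 < m + 1)).mp hτ₁; simp only [γ]; linarith
  have hexp : (2 - m) / (m + 1) + τ = -(γ * (1 / (m + 1))) := by
    simp only [γ]; field_simp; ring
  have ha : 1 < a := by simp only [a]; linarith
  have hla : 0 < log a := log_pos ha
  -- the pointwise bound itself forces `C * N ≥ 0`, since its remaining factors are positive
  have hCN : 0 ≤ C * N := by
    have := (abs_nonneg _).trans hx
    rw [mul_assoc] at this
    exact nonneg_of_mul_nonneg_left this (by positivity)
  calc |∑' y : ℤ × ℤ, Φ₀ (y - x) * f y| * (1 + r) ^ τ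
      ≤ C * N * a ^ ((2 - m) / (m + 1)) * log a ^ (1 / (m + 1)) * a ^ τ := by
        gcongr
        simp only [a]; linarith
    _ = C * N * (a ^ (-(γ * (1 / (m + 1)))) * log a ^ (1 / (m + 1))) := by
        rw [← hexp, rpow_add (by positivity)]; ring
    _ ≤ C * N * (1 / γ) ^ (1 / (m + 1)) :=
        mul_le_mul_of_nonneg_left (rpow_neg_mul_mul_log_rpow_le ha.le hγ (by positivity)) hCN
    _ = C * (1 / γ) ^ (1 / (m + 1)) * N := by ring

/-- Weighted-norm estimate for `Φ₀ ∗ f`: if the pointwise estimate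
`|(Φ₀∗f)(x)| ≤ (c₀^m/(m-2)⁴) N (e+|x|)^{(2-m)/(m+1)} (ln(e+|x|))^{1/(m+1)}`
holds, then for `τ ∈ (0,(m-2)/(m+1))`,
`‖Φ₀∗f‖_{ℓ^∞_τ} ≤ (c₀^m/(m-2)⁴)(1/(m-2-τ(m+1)))^{1/(m+1)} N`. -/
theorem green_convolution_weighted_estimate (Φ₀ f : ℤ × ℤ → ℝ)
    (m τ c₀ N : ℝ) (hm : 2 < m) (hτ₀ : 0 < τ) (hτ₁ : τ < (m - 2) / (m + 1))
    (hc₀ : 1 < c₀) (hN : 0 ≤ N)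
    (hnorm : ∀ x, |f x| * (1 + latticeNorm x) ^ m ≤ N)
    (hzero : HasSum f 0)
    (hpointwise : ∀ x : ℤ × ℤ,
      |∑' y : ℤ × ℤ, Φ₀ (y - x) * f y| ≤
        (c₀ ^ m / (m - 2) ^ 4) * N *
          (Real.exp 1 + latticeNorm x) ^ ((2 - m) / (m + 1)) *
          (Real.log (Real.exp 1 + latticeNorm x)) ^ (1 / (m + 1))) :
    ∀ x : ℤ × ℤ,
      |∑' y : ℤ × ℤ, Φ₀ (y - x) * f y| * (1 + latticeNorm x) ^ τ ≤
        (c₀ ^ m / (m - 2) ^ 4) * (1 / (m - 2 - τ * (m + 1))) ^ (1 / (m + 1)) * N :=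
  green_convolution_weighted_estimate_general Φ₀ f m τ c₀ N hm hτ₀ hτ₁ hpointwise
end

section
/- Let K, g : ℤ² → ℝ with K ≥ 0, K ≢ 0, Σ_{x} g(x) converges with Σ_x g(x) > 0, and suppose g(x) ≤ C₀ K(x) for all x and some constant C₀. Let κ > 0 and suppose u₁, u₂ : ℤ² → ℝ are two solutions of −Δu + K e^{κu} = g on ℤ² satisfying u_i(x) → a_i as x → ∞ for constants a₁, a₂ ∈ ℝ. Then a₁ = a₂ and u₁ ≡ u₂. -/
open Filter Topology Real

theorem lattice_induction {P : ℤ × ℤ → Prop} {x₀ : ℤ × ℤ} (h₀ : P x₀)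
    (hstep : ∀ x, P x → P (x.1 + 1, x.2) ∧ P (x.1 - 1, x.2) ∧ P (x.1, x.2 + 1) ∧
      P (x.1, x.2 - 1)) (y : ℤ × ℤ) : P y := by
  have row (i : ℤ) : P (i, x₀.2) :=
    Int.inductionOn' (motive := fun i => P (i, x₀.2)) i x₀.1 h₀
      (fun _ _ hk => (hstep _ hk).1) (fun _ _ hk => (hstep _ hk).2.1)
  exact Int.inductionOn' (motive := fun j => P (y.1, j)) y.2 x₀.2 (row y.1)
    (fun _ _ hk => (hstep _ hk).2.2.1) (fun _ _ hk => (hstep _ hk).2.2.2)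

theorem latticeLap_nonneg_of_forall_le {v : ℤ × ℤ → ℝ} {z : ℤ × ℤ} (hz : ∀ y, v z ≤ v y) :
    0 ≤ latticeLap v z := by
  unfold latticeLap
  linarith [hz (z.1 + 1, z.2), hz (z.1 - 1, z.2), hz (z.1, z.2 + 1), hz (z.1, z.2 - 1)]

theorem eq_of_forall_le_of_latticeLap_nonpos {v : ℤ × ℤ → ℝ} {z : ℤ × ℤ}
    (hz : ∀ y, v z ≤ v y) (hlap : ∀ x, v x = v z → latticeLap v x ≤ 0) (y : ℤ × ℤ) :
    v y = v z := by
  refine lattice_induction (P := fun x => v x = v z) rfl (fun x hx => ?_) y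
  have hlapx := hlap x hx
  unfold latticeLap at hlapx
  refine ⟨?_, ?_, ?_, ?_⟩ <;>
    linarith [hz (x.1 + 1, x.2), hz (x.1 - 1, x.2), hz (x.1, x.2 + 1), hz (x.1, x.2 - 1)]

theorem exists_forall_le_of_tendsto {α : Type*} {v : α → ℝ} {L : ℝ}
    (hv : Tendsto v cofinite (𝓝 L)) {x : α} (hx : v x < L) : ∃ z, ∀ y, v z ≤ v y := by
  have hfin : {y | v y ≤ v x}.Finite := by
    simpa only [not_lt] using eventually_cofinite.1 (hv.eventually (lt_mem_nhds hx))
  obtain ⟨z, hzx, hz⟩ := Set.exists_min_image _ v hfin ⟨x, le_refl (v x)⟩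
  refine ⟨z, fun y => ?_⟩
  rcases le_or_gt (v y) (v x) with hy | hy
  · exact hz y hy
  · exact hzx.trans hy.le

theorem le_of_tendsto_of_latticeLap_nonpos {v : ℤ × ℤ → ℝ} {L c : ℝ}
    (hv : Tendsto v cofinite (𝓝 L)) (hcL : c ≤ L) (hlap : ∀ x, v x < c → latticeLap v x ≤ 0)
    (x : ℤ × ℤ) : c ≤ v x := by
  by_contra! hx
  obtain ⟨z, hz⟩ := exists_forall_le_of_tendsto hv (hx.trans_le hcL)
  have hzc : v z < c := (hz x).trans_lt hx
  have hconst : v = fun _ => v z :=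
    funext (eq_of_forall_le_of_latticeLap_nonpos hz fun y hy => hlap y (hy ▸ hzc))
  rw [hconst] at hv
  linarith [tendsto_nhds_unique hv tendsto_const_nhds]

theorem tendsto_sq_add_sq_cofinite_atTop :
    Tendsto (fun x : ℤ × ℤ => (x.1 : ℝ) ^ 2 + (x.2 : ℝ) ^ 2) cofinite atTop := by
  have hnorm : ∀ n : ℤ, ‖n‖ ≤ (n : ℝ) ^ 2 := fun n => by
    rw [Int.norm_eq_abs, ← Int.cast_abs]; exact_mod_cast Int.natAbs_le_self_sq n
  refine tendsto_atTop_mono (fun x => ?_)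
    (cocompact_eq_cofinite (ℤ × ℤ) ▸ tendsto_norm_cocompact_atTop)
  rw [Prod.norm_def]
  exact max_le ((hnorm _).trans (le_add_of_nonneg_right (sq_nonneg _)))
    ((hnorm _).trans (le_add_of_nonneg_left (sq_nonneg _)))

noncomputable def barrierProfile (t : ℝ) : ℝ := log t - t⁻¹

/-- A discrete analogue of `log |x|²`: the correction `-|x|⁻²` absorbs the `O(|x|⁻⁴)` error
of the lattice Laplacian of the logarithm, so `barrier` is strictly superharmonic for
`|x|² ≥ 8` while still tending to `+∞`. -/
noncomputable def barrier (x : ℤ × ℤ) : ℝ := barrierProfile ((x.1 : ℝ) ^ 2 + (x.2 : ℝ) ^ 2)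

theorem barrierProfile_add_barrierProfile_le {s c : ℝ} (hs : 0 < s) (hc : c ^ 2 < (s + 1) ^ 2) :
    barrierProfile (s + 1 + c) + barrierProfile (s + 1 - c) - 2 * barrierProfile s ≤
      (2 * s + 1 - c ^ 2) / s ^ 2 + 2 / s - 2 / (s + 1) - 2 * c ^ 2 / (s + 1) ^ 3 := by
  obtain ⟨hc₁, hc₂⟩ := abs_lt_of_sq_lt_sq' hc (by linarith)
  have hplus : 0 < s + 1 + c := by linarith
  have hminus : 0 < s + 1 - c := by linarith
  have hlog : log (s + 1 + c) + log (s + 1 - c) - 2 * log s ≤ (2 * s + 1 - c ^ 2) / s ^ 2 := by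
    have h := log_le_sub_one_of_pos (by positivity : 0 < (s + 1 + c) * (s + 1 - c) / s ^ 2)
    rw [log_div (by positivity) (by positivity), log_mul hplus.ne' hminus.ne', log_pow] at h
    have hq : (s + 1 + c) * (s + 1 - c) / s ^ 2 - 1 = (2 * s + 1 - c ^ 2) / s ^ 2 := by
      field_simp; ring
    linarith
  have hinv : 2 / (s + 1) + 2 * c ^ 2 / (s + 1) ^ 3 ≤ (s + 1 + c)⁻¹ + (s + 1 - c)⁻¹ := by
    rw [inv_add_inv hplus.ne' hminus.ne', div_add_div _ _ (by positivity) (by positivity),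
      div_le_div_iff₀ (by positivity) (by positivity)]
    nlinarith [sq_nonneg c, pow_pos (by linarith : (0 : ℝ) < s + 1) 4,
      mul_nonneg (sq_nonneg (c ^ 2)) (by linarith : (0 : ℝ) ≤ s + 1)]
  unfold barrierProfile
  linarith [div_eq_mul_inv 2 s]

theorem latticeLap_barrier_neg {x : ℤ × ℤ} (hx : 8 ≤ (x.1 : ℝ) ^ 2 + (x.2 : ℝ) ^ 2) :
    latticeLap barrier x < 0 := by
  obtain ⟨p, q⟩ := x
  set s : ℝ := (p : ℝ) ^ 2 + (q : ℝ) ^ 2 with hs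
  have hs0 : 0 < s := by linarith
  have hp : (2 * (p : ℝ)) ^ 2 < (s + 1) ^ 2 := by nlinarith [sq_nonneg (q : ℝ)]
  have hq : (2 * (q : ℝ)) ^ 2 < (s + 1) ^ 2 := by nlinarith [sq_nonneg (p : ℝ)]
  have hsum₁ : (2 * s + 1 - (2 * (p : ℝ)) ^ 2) / s ^ 2 + (2 * s + 1 - (2 * (q : ℝ)) ^ 2) / s ^ 2
      = 2 / s ^ 2 := by
    field_simp; ring
  have hsum₂ : 2 * (2 * (p : ℝ)) ^ 2 / (s + 1) ^ 3 + 2 * (2 * (q : ℝ)) ^ 2 / (s + 1) ^ 3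
      = 8 * s / (s + 1) ^ 3 := by
    field_simp; ring
  have hrat : 2 / s ^ 2 + 4 / s - 4 / (s + 1) - 8 * s / (s + 1) ^ 3 < 0 := by
    have h : 2 / s ^ 2 + 4 / s - 4 / (s + 1) - 8 * s / (s + 1) ^ 3
        = -(2 * s ^ 3 - 14 * s ^ 2 - 10 * s - 2) / (s ^ 2 * (s + 1) ^ 3) := by
      field_simp; ring
    rw [h]
    exact div_neg_of_neg_of_pos (by nlinarith) (by positivity)
  simp only [latticeLap, barrier]
  push_cast
  rw [← hs, show ((p : ℝ) + 1) ^ 2 + (q : ℝ) ^ 2 = s + 1 + 2 * p by ring,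
    show ((p : ℝ) - 1) ^ 2 + (q : ℝ) ^ 2 = s + 1 - 2 * p by ring,
    show (p : ℝ) ^ 2 + ((q : ℝ) + 1) ^ 2 = s + 1 + 2 * q by ring,
    show (p : ℝ) ^ 2 + ((q : ℝ) - 1) ^ 2 = s + 1 - 2 * q by ring]
  linarith [barrierProfile_add_barrierProfile_le hs0 hp,
    barrierProfile_add_barrierProfile_le hs0 hq, hrat, show 4 / s - 4 / (s + 1) = 2 * (2 / s - 2 / (s + 1)) by ring]

theorem tendsto_barrierProfile_atTop : Tendsto barrierProfile atTop atTop := by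
  show Tendsto (fun t => log t - t⁻¹) atTop atTop
  simpa only [← sub_eq_add_neg, neg_zero] using
    tendsto_log_atTop.atTop_add tendsto_inv_atTop_zero.neg

theorem tendsto_barrier_cofinite_atTop : Tendsto barrier cofinite atTop :=
  tendsto_barrierProfile_atTop.comp tendsto_sq_add_sq_cofinite_atTop

theorem exists_le_of_latticeLap_nonpos_of_tendsto {h : ℤ × ℤ → ℝ} {L : ℝ}
    (hlap : ∀ x, latticeLap h x ≤ 0) (hh : Tendsto h cofinite (𝓝 L)) : ∃ x, h x ≤ L := by
  by_contra! hpos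
  set F := {x : ℤ × ℤ | ¬ 8 ≤ (x.1 : ℝ) ^ 2 + (x.2 : ℝ) ^ 2}
  have hF : F.Finite :=
    eventually_cofinite.1 (tendsto_sq_add_sq_cofinite_atTop.eventually_ge_atTop 8)
  have h0F : ((0, 0) : ℤ × ℤ) ∈ F := by norm_num [F]
  obtain ⟨z₁, hz₁F, hz₁⟩ := Set.exists_min_image F h hF ⟨_, h0F⟩
  obtain ⟨z₂, -, hz₂⟩ := Set.exists_min_image F barrier hF ⟨_, h0F⟩
  -- `h + ε • barrier` cannot attain its minimum where `barrier` is strictly superharmonic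
  have hmin : ∀ ε > 0, ∀ x, h z₁ + ε * barrier z₂ ≤ h x + ε * barrier x := by
    intro ε hε x
    obtain ⟨z, hz⟩ :=
      (hh.add_atTop (tendsto_barrier_cofinite_atTop.const_mul_atTop hε)).exists_forall_le
    have hzF : z ∈ F := fun hz8 => by
      have hlin : latticeLap (fun y => h y + ε * barrier y) z
          = latticeLap h z + ε * latticeLap barrier z := by
        simp only [latticeLap]; ring
      have := latticeLap_nonneg_of_forall_le (v := fun y => h y + ε * barrier y) hz
      linarith [hlap z, mul_neg_of_pos_of_neg hε (latticeLap_barrier_neg hz8)]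
    calc h z₁ + ε * barrier z₂ ≤ h z + ε * barrier z :=
          add_le_add (hz₁ z hzF) (mul_le_mul_of_nonneg_left (hz₂ z hzF) hε.le)
      _ ≤ h x + ε * barrier x := hz x
  have hge (x : ℤ × ℤ) : h z₁ ≤ h x := by
    have hcont : Continuous fun ε : ℝ => h x + ε * (barrier x - barrier z₂) := by fun_prop
    have hlim :=
      (hcont.tendsto' 0 (h x) (by simp)).mono_left (nhdsWithin_le_nhds (s := Set.Ioi 0))
    refine ge_of_tendsto hlim (eventually_nhdsWithin_of_forall fun ε hε => ?_)
    linarith [hmin ε hε x, mul_sub ε (barrier x) (barrier z₂)]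
  obtain ⟨x, hx⟩ := (hh.eventually (gt_mem_nhds (hpos z₁))).exists
  exact (hge x).not_gt hx

theorem eq_of_latticeLap_nonpos_of_tendsto {h : ℤ × ℤ → ℝ} {L : ℝ}
    (hlap : ∀ x, latticeLap h x ≤ 0) (hh : Tendsto h cofinite (𝓝 L)) (x : ℤ × ℤ) : h x = L := by
  have hL : ∀ y, L ≤ h y := le_of_tendsto_of_latticeLap_nonpos hh le_rfl fun y _ => hlap y
  obtain ⟨x₀, hx₀⟩ := exists_le_of_latticeLap_nonpos_of_tendsto hlap hh
  rw [eq_of_forall_le_of_latticeLap_nonpos (fun y => hx₀.trans (hL y)) (fun y _ => hlap y) x]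
  exact le_antisymm hx₀ (hL x₀)

theorem latticeLap_sub_of_solutions {K g u v : ℤ × ℤ → ℝ} {κ : ℝ}
    (hu : ∀ x, -latticeLap u x + K x * exp (κ * u x) = g x)
    (hv : ∀ x, -latticeLap v x + K x * exp (κ * v x) = g x) (x : ℤ × ℤ) :
    latticeLap (u - v) x = K x * (exp (κ * u x) - exp (κ * v x)) := by
  have hsub : latticeLap (u - v) x = latticeLap u x - latticeLap v x := by
    simp only [latticeLap, Pi.sub_apply]; ring
  linear_combination hsub + hv x - hu x

theorem latticeLap_sub_nonpos_of_solutions {K g u v : ℤ × ℤ → ℝ} {κ : ℝ}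
    (hu : ∀ x, -latticeLap u x + K x * exp (κ * u x) = g x)
    (hv : ∀ x, -latticeLap v x + K x * exp (κ * v x) = g x) (hκ : 0 ≤ κ) {x : ℤ × ℤ}
    (hK : 0 ≤ K x) (huv : u x ≤ v x) : latticeLap (u - v) x ≤ 0 := by
  rw [latticeLap_sub_of_solutions hu hv]
  exact mul_nonpos_of_nonneg_of_nonpos hK
    (sub_nonpos.2 (exp_le_exp.2 (mul_le_mul_of_nonneg_left huv hκ)))

theorem absorption_uniqueness_general (K g : ℤ × ℤ → ℝ) (κ : ℝ)
    (hK : ∀ x, 0 ≤ K x) (hKne : ∃ x, K x ≠ 0)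
    (hκ : 0 < κ)
    (u₁ u₂ : ℤ × ℤ → ℝ) (a₁ a₂ : ℝ)
    (heq₁ : ∀ x, -latticeLap u₁ x + K x * Real.exp (κ * u₁ x) = g x)
    (heq₂ : ∀ x, -latticeLap u₂ x + K x * Real.exp (κ * u₂ x) = g x)
    (hlim₁ : Filter.Tendsto u₁ Filter.cofinite (nhds a₁))
    (hlim₂ : Filter.Tendsto u₂ Filter.cofinite (nhds a₂)) :
    a₁ = a₂ ∧ u₁ = u₂ := by
  wlog hle : a₂ ≤ a₁ generalizing u₁ u₂ a₁ a₂
  · obtain ⟨ha, hu⟩ := this u₂ u₁ a₂ a₁ heq₂ heq₁ hlim₂ hlim₁ (le_of_not_ge hle)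
    exact ⟨ha.symm, hu.symm⟩
  have hle_u (x : ℤ × ℤ) : u₂ x ≤ u₁ x := sub_nonneg.1 <|
    le_of_tendsto_of_latticeLap_nonpos (hlim₁.sub hlim₂) (sub_nonneg.2 hle)
      (fun y hy => latticeLap_sub_nonpos_of_solutions heq₁ heq₂ hκ.le (hK y) (sub_neg.1 hy).le) x
  have hconst (x : ℤ × ℤ) : (u₂ - u₁) x = a₂ - a₁ :=
    eq_of_latticeLap_nonpos_of_tendsto
      (fun y => latticeLap_sub_nonpos_of_solutions heq₂ heq₁ hκ.le (hK y) (hle_u y))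
      (hlim₂.sub hlim₁) x
  obtain ⟨x₀, hKx₀⟩ := hKne
  have hx₀ : u₂ x₀ = u₁ x₀ := by
    have hlap : latticeLap (u₂ - u₁) x₀ = 0 := by simp only [latticeLap, hconst]; ring
    rw [latticeLap_sub_of_solutions heq₂ heq₁, mul_eq_zero, sub_eq_zero, exp_eq_exp,
      mul_right_inj' hκ.ne'] at hlap
    exact hlap.resolve_left hKx₀
  have ha : a₁ = a₂ := by linarith [hconst x₀, Pi.sub_apply u₂ u₁ x₀]
  exact ⟨ha, funext fun x => by linarith [hconst x, Pi.sub_apply u₂ u₁ x]⟩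

/-- Uniqueness of bounded solutions to `-Δu + K e^{κu} = g` on `ℤ²` with limits
at infinity. -/
theorem absorption_uniqueness (K g : ℤ × ℤ → ℝ) (C₀ κ : ℝ)
    (hK : ∀ x, 0 ≤ K x) (hKne : ∃ x, K x ≠ 0)
    (hg : Summable g) (hgpos : 0 < ∑' x : ℤ × ℤ, g x)
    (hgK : ∀ x, g x ≤ C₀ * K x)
    (hκ : 0 < κ)
    (u₁ u₂ : ℤ × ℤ → ℝ) (a₁ a₂ : ℝ)
    (heq₁ : ∀ x, -latticeLap u₁ x + K x * Real.exp (κ * u₁ x) = g x)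
    (heq₂ : ∀ x, -latticeLap u₂ x + K x * Real.exp (κ * u₂ x) = g x)
    (hlim₁ : Filter.Tendsto u₁ Filter.cofinite (nhds a₁))
    (hlim₂ : Filter.Tendsto u₂ Filter.cofinite (nhds a₂)) :
    a₁ = a₂ ∧ u₁ = u₂ :=
  absorption_uniqueness_general K g κ hK hKne hκ u₁ u₂ a₁ a₂ heq₁ heq₂ hlim₁ hlim₂
end
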